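/- arXiv:2604.04092 — 6 statements merged into one kernel-verified Lean document; each statement's English description precedes it below -/
import Mathlib

section
/- Let M1, M2 ≥ 2 be integers, P > 0 real, and α* = (M1² − 1)/(M1²M2² − 1). Then for all real α with 0 < α ≤ α*, we have √(12(1−α)P/(M2²−1)) − (M1−1)·√(12αP/(M1²−1)) ≥ √(12αP/(M1²−1)); i.e., the inter-cluster distance of the superimposed PAM constellation is at least the intra-cluster distance, so the minimum distance equals √(12αP/(M1²−1)). -/
/-- Minimum distance of the superimposed PAM constellation: for `0 < α ≤ α*`,
the inter-cluster distance is at least the intra-cluster distance, so the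
minimum distance equals the intra-cluster distance `√(12αP/(M1²−1))`. -/
theorem stmt_0 (M1 M2 : ℕ) (hM1 : 2 ≤ M1) (hM2 : 2 ≤ M2) (P : ℝ) (hP : 0 < P)
    (αs : ℝ) (hαs : αs = ((M1 : ℝ)^2 - 1) / ((M1 : ℝ)^2 * (M2 : ℝ)^2 - 1)) :
    ∀ α : ℝ, 0 < α → α ≤ αs →
      Real.sqrt (12 * (1 - α) * P / ((M2 : ℝ)^2 - 1))
          - ((M1 : ℝ) - 1) * Real.sqrt (12 * α * P / ((M1 : ℝ)^2 - 1))
        ≥ Real.sqrt (12 * α * P / ((M1 : ℝ)^2 - 1)) ∧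
      min (Real.sqrt (12 * (1 - α) * P / ((M2 : ℝ)^2 - 1))
            - ((M1 : ℝ) - 1) * Real.sqrt (12 * α * P / ((M1 : ℝ)^2 - 1)))
          (Real.sqrt (12 * α * P / ((M1 : ℝ)^2 - 1)))
        = Real.sqrt (12 * α * P / ((M1 : ℝ)^2 - 1)) := by
  intro α hα hαle
  have hm1 : (2:ℝ) ≤ (M1:ℝ) := by exact_mod_cast hM1
  have hm2 : (2:ℝ) ≤ (M2:ℝ) := by exact_mod_cast hM2
  have h1 : (0:ℝ) < (M1:ℝ)^2 - 1 := by nlinarith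
  have h2 : (0:ℝ) < (M2:ℝ)^2 - 1 := by nlinarith
  have hden : (0:ℝ) < (M1:ℝ)^2 * (M2:ℝ)^2 - 1 := by nlinarith
  -- key inequality on squares
  have hkey : (M1:ℝ)^2 * (12 * α * P / ((M1:ℝ)^2 - 1)) ≤
      12 * (1 - α) * P / ((M2:ℝ)^2 - 1) := by
    rw [← mul_div_assoc, div_le_div_iff₀ h1 h2]
    have hαle' : α * ((M1:ℝ)^2 * (M2:ℝ)^2 - 1) ≤ (M1:ℝ)^2 - 1 := by
      rw [hαs] at hαle
      calc α * ((M1:ℝ)^2 * (M2:ℝ)^2 - 1)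
          ≤ (((M1:ℝ)^2 - 1) / ((M1:ℝ)^2 * (M2:ℝ)^2 - 1)) * ((M1:ℝ)^2 * (M2:ℝ)^2 - 1) := by
            exact mul_le_mul_of_nonneg_right hαle (le_of_lt hden)
        _ = (M1:ℝ)^2 - 1 := by field_simp
    nlinarith [sq_nonneg ((M1:ℝ) * (M2:ℝ))]
  have hx : (0:ℝ) ≤ 12 * α * P / ((M1:ℝ)^2 - 1) := by positivity
  have hM1sq : Real.sqrt ((M1:ℝ)^2 * (12 * α * P / ((M1:ℝ)^2 - 1)))
      = (M1:ℝ) * Real.sqrt (12 * α * P / ((M1:ℝ)^2 - 1)) := by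
    rw [Real.sqrt_mul (sq_nonneg _), Real.sqrt_sq (by linarith : (0:ℝ) ≤ (M1:ℝ))]
  have hmain : (M1:ℝ) * Real.sqrt (12 * α * P / ((M1:ℝ)^2 - 1))
      ≤ Real.sqrt (12 * (1 - α) * P / ((M2:ℝ)^2 - 1)) := by
    rw [← hM1sq]
    exact Real.sqrt_le_sqrt hkey
  constructor
  · linarith [hmain]
  · exact min_eq_right (by linarith [hmain])
end

section
/- Let M1, M2 ≥ 2 be integers and let δ be a real number with (M1·M2 − 1)²/(M1²M2² − 1) < δ ≤ (M1·M2 + M1)²/(M1²M2² − 1). Then (1/2)·log₂(1 + ((M1²−1)/M1²)·δ + 1/(M1²·δ)) + (1/2)·log₂(2πe/12) < 1.188. -/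
lemma key (m n δ : ℝ) (hm : 2 ≤ m) (hn : 2 ≤ n)
    (hl : (m*n - 1)^2 / (m^2*n^2 - 1) < δ)
    (hu : δ ≤ (m*n + m)^2 / (m^2*n^2 - 1)) :
    ((m^2 - 1)/m^2)*δ + 1/(m^2*δ) ≤ 12/5 := by
  have hD : (0:ℝ) < m^2*n^2 - 1 := by nlinarith
  have hP : (0:ℝ) < m*n - 1 := by nlinarith
  have hQ : (0:ℝ) < m*n + 1 := by nlinarith
  have hm0 : (0:ℝ) < m := by linarith
  have heq : (m*n - 1)^2 / (m^2*n^2 - 1) = (m*n - 1)/(m*n + 1) := by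
    rw [div_eq_div_iff hD.ne' hQ.ne']; ring
  have hlb : (m*n - 1)/(m*n + 1) < δ := by rwa [heq] at hl
  have hδ0 : 0 < δ := lt_trans (div_pos hP hQ) hlb
  have hinv : 1/δ < (m*n + 1)/(m*n - 1) := by
    rw [div_lt_div_iff₀ hδ0 hP]
    have := (div_lt_iff₀ hQ).mp hlb
    nlinarith
  have hsplit : 1/(m^2*δ) = (1/m^2)*(1/δ) := by
    rw [one_div, one_div, one_div, mul_inv]
  have han : (0:ℝ) ≤ (m^2 - 1)/m^2 := div_nonneg (by nlinarith) (by positivity)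
  have h1 : ((m^2 - 1)/m^2)*δ ≤ ((m^2 - 1)/m^2) * ((m*n + m)^2 / (m^2*n^2 - 1)) :=
    mul_le_mul_of_nonneg_left hu han
  have h2 : (1/m^2)*(1/δ) ≤ (1/m^2) * ((m*n + 1)/(m*n - 1)) :=
    mul_le_mul_of_nonneg_left hinv.le (by positivity)
  have hcore : 0 ≤ 7*m^4*n^2 - 10*m^4*n - 5*m^4 + 10*m^2*n - 7*m^2 - 10*m*n - 5 := by
    have hn2 : (0:ℝ) ≤ n - 2 := by linarith
    have hm2 : (0:ℝ) ≤ m - 2 := by linarith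
    have c1 : 0 ≤ (n-2)*((7*n+4)*m^4) := mul_nonneg hn2 (by positivity)
    have c2 : (4:ℝ) ≤ m^2 := by nlinarith
    have c3 : 0 ≤ (m-2)*(n*m) := mul_nonneg hm2 (by positivity)
    nlinarith [c1, c2, c3]
  have hfin : ((m^2 - 1)/m^2) * ((m*n + m)^2 / (m^2*n^2 - 1))
      + (1/m^2) * ((m*n + 1)/(m*n - 1)) ≤ 12/5 := by
    rw [div_mul_div_comm, div_mul_div_comm, div_add_div _ _ (by positivity) (by positivity),
      div_le_div_iff₀ (by positivity) (by norm_num)]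
    nlinarith [mul_nonneg (mul_nonneg (sq_nonneg m) hP.le) hcore]
  calc ((m^2 - 1)/m^2)*δ + 1/(m^2*δ)
      = ((m^2 - 1)/m^2)*δ + (1/m^2)*(1/δ) := by rw [hsplit]
    _ ≤ ((m^2 - 1)/m^2) * ((m*n + m)^2 / (m^2*n^2 - 1)) + (1/m^2) * ((m*n + 1)/(m*n - 1)) :=
        add_le_add h1 h2
    _ ≤ 12/5 := hfin

/-- Gap bound for user 1 at power allocation `α*`:
`(1/2)log₂(1 + ((M1²−1)/M1²)δ + 1/(M1²δ)) + (1/2)log₂(2πe/12) < 1.188`. -/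
theorem stmt_1 (M1 M2 : ℕ) (hM1 : 2 ≤ M1) (hM2 : 2 ≤ M2) (δ : ℝ)
    (hδl : ((M1 : ℝ) * M2 - 1)^2 / ((M1 : ℝ)^2 * (M2 : ℝ)^2 - 1) < δ)
    (hδu : δ ≤ ((M1 : ℝ) * M2 + M1)^2 / ((M1 : ℝ)^2 * (M2 : ℝ)^2 - 1)) :
    (1/2) * Real.logb 2 (1 + (((M1 : ℝ)^2 - 1) / (M1 : ℝ)^2) * δ + 1 / ((M1 : ℝ)^2 * δ))
      + (1/2) * Real.logb 2 (2 * Real.pi * Real.exp 1 / 12) < 1.188 := by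
  set m : ℝ := (M1 : ℝ) with hmdef
  set n : ℝ := (M2 : ℝ) with hndef
  have hm : (2:ℝ) ≤ m := by rw [hmdef]; exact_mod_cast hM1
  have hn : (2:ℝ) ≤ n := by rw [hndef]; exact_mod_cast hM2
  have hm0 : (0:ℝ) < m := by linarith
  have hD : (0:ℝ) < m^2*n^2 - 1 := by nlinarith
  have hP : (0:ℝ) < m*n - 1 := by nlinarith
  have hδ0 : 0 < δ := lt_trans (div_pos (by positivity) hD) hδl
  have hkey := key m n δ hm hn hδl hδu
  set A : ℝ := 1 + ((m^2 - 1)/m^2)*δ + 1/(m^2*δ) with hAdef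
  set B : ℝ := 2 * Real.pi * Real.exp 1 / 12 with hBdef
  have hA0 : 0 < A := by
    have h1 : (0:ℝ) ≤ ((m^2 - 1)/m^2)*δ :=
      mul_nonneg (div_nonneg (by nlinarith) (by positivity)) hδ0.le
    have h2 : (0:ℝ) < 1/(m^2*δ) := by positivity
    rw [hAdef]; linarith
  have hA : A ≤ 17/5 := by rw [hAdef]; linarith
  have hB0 : 0 < B := by rw [hBdef]; positivity
  have hB : B < 36/25 := by
    rw [hBdef]
    have hpi := Real.pi_lt_d2
    have he := Real.exp_one_lt_d9
    have hpi0 := Real.pi_pos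
    have he0 := Real.exp_pos 1
    nlinarith
  have hAB : A * B < 49/10 := by nlinarith
  have hAB0 : 0 < A * B := mul_pos hA0 hB0
  have hlog : Real.logb 2 (A*B) < 19/8 := by
    have h1 : Real.logb 2 (A*B) < Real.logb 2 (49/10) :=
      Real.logb_lt_logb (by norm_num) hAB0 hAB
    have h2 : Real.logb 2 ((49/10:ℝ)^(8:ℕ)) < Real.logb 2 ((2:ℝ)^(19:ℕ)) :=
      Real.logb_lt_logb (by norm_num) (by positivity) (by norm_num)
    rw [Real.logb_pow, Real.logb_pow, Real.logb_self_eq_one (by norm_num : (1:ℝ) < 2)] at h2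
    push_cast at h2
    linarith
  have hsum : (1/2) * Real.logb 2 A + (1/2) * Real.logb 2 B
      = (1/2) * Real.logb 2 (A*B) := by
    rw [Real.logb_mul hA0.ne' hB0.ne']; ring
  rw [hsum]
  norm_num
  linarith
end

section
/- Let M1, M2 ≥ 2 be integers and let S > (M2 − 1)² be a positive real (SNR of user 2). Then 1 + (1/M2²)·(M1²M2² − M1²)·S / ((M1²M2² − 1) + (M1² − 1)·S) + ((M1²M2² − 1) + (M1² − 1)·S) / (M1²·M2²·S) < 1 + 4/3 + 1 + 1/4 = 43/12. -/
/-- Key algebraic inequality used for the weak user's gap at `α*`. -/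
theorem stmt_3 (M1 M2 : ℕ) (hM1 : 2 ≤ M1) (hM2 : 2 ≤ M2) (S : ℝ) (hS : 0 < S)
    (hS2 : ((M2 : ℝ) - 1)^2 < S) :
    1 + (1 / (M2 : ℝ)^2) * (((M1 : ℝ)^2 * (M2 : ℝ)^2 - (M1 : ℝ)^2) * S)
          / (((M1 : ℝ)^2 * (M2 : ℝ)^2 - 1) + ((M1 : ℝ)^2 - 1) * S)
      + (((M1 : ℝ)^2 * (M2 : ℝ)^2 - 1) + ((M1 : ℝ)^2 - 1) * S)
          / ((M1 : ℝ)^2 * (M2 : ℝ)^2 * S)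
      < 43/12 := by
  have hA : (2:ℝ) ≤ (M1:ℝ) := by exact_mod_cast hM1
  have hB : (2:ℝ) ≤ (M2:ℝ) := by exact_mod_cast hM2
  set A : ℝ := (M1:ℝ)
  set B : ℝ := (M2:ℝ)
  have hA2 : (4:ℝ) ≤ A^2 := by nlinarith
  have hB2 : (4:ℝ) ≤ B^2 := by nlinarith
  have hS1 : (1:ℝ) < S := by nlinarith
  have hD : (0:ℝ) < (A^2 * B^2 - 1) + (A^2 - 1) * S := by nlinarith
  have h1 : (1 / B^2) * ((A^2 * B^2 - A^2) * S) / ((A^2 * B^2 - 1) + (A^2 - 1) * S) < 4/3 := by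
    rw [div_lt_iff₀ hD]
    have hB2pos : (0:ℝ) < B^2 := by nlinarith
    rw [div_mul_eq_mul_div, div_lt_iff₀ hB2pos] at *
    have key : 3*(A^2*(B^2-1)) < 4*(B^2*(A^2-1)) := by nlinarith
    nlinarith [mul_lt_mul_of_pos_right key hS, mul_nonneg (le_of_lt hB2pos) (show (0:ℝ) ≤ A^2*B^2 - 1 by nlinarith)]
  have h2 : ((A^2 * B^2 - 1) + (A^2 - 1) * S) / (A^2 * B^2 * S) < 5/4 := by
    rw [div_lt_iff₀ (mul_pos (mul_pos (show (0:ℝ) < A^2 by nlinarith) (show (0:ℝ) < B^2 by nlinarith)) hS)]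
    nlinarith [mul_pos hS (show (0:ℝ) < A^2*B^2 by nlinarith), mul_lt_mul_of_pos_left hS1 (show (0:ℝ) < A^2*B^2 by nlinarith)]
  linarith
end

section
/- Let M1 ≥ 2 and N1 ≥ 2(M1 + 1) be integers, and let S > 0 be a real number (SNR1). Then (1/2)·log₂( ((N1 − M1 − 1)² − 1 + S·((M1+1)² − 1)) / (N1² − 1 + S·(M1² − 1)) ) + (1/2)·log₂( (N1² − 1)/((N1 − M1 − 1)² − 1) ) < (1/2)·log₂(8/3) + (1/2)·log₂(35/8). -/
set_option maxHeartbeats 400000 in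


/-- Bound on the horizontal gap between adjacent Gaussian capacity corner points. -/
theorem stmt_7 (M1 N1 : ℕ) (hM1 : 2 ≤ M1) (hN1 : 2 * (M1 + 1) ≤ N1)
    (S : ℝ) (hS : 0 < S) :
    (1/2) * Real.logb 2 ((((N1 : ℝ) - M1 - 1)^2 - 1 + S * (((M1 : ℝ) + 1)^2 - 1))
          / ((N1 : ℝ)^2 - 1 + S * ((M1 : ℝ)^2 - 1)))
      + (1/2) * Real.logb 2 (((N1 : ℝ)^2 - 1) / (((N1 : ℝ) - M1 - 1)^2 - 1))
      < (1/2) * Real.logb 2 (8/3) + (1/2) * Real.logb 2 (35/8) := by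
  have hm : (2:ℝ) ≤ (M1:ℝ) := by exact_mod_cast hM1
  have hn : 2 * ((M1:ℝ) + 1) ≤ (N1:ℝ) := by exact_mod_cast hN1
  set x : ℝ := (M1:ℝ) with hx
  set y : ℝ := (N1:ℝ) with hy
  have hu : 0 ≤ x - 2 := by linarith
  have ht : 0 ≤ y - 2*x - 2 := by linarith
  have hA : (0:ℝ) < (y - x - 1)^2 - 1 := by nlinarith
  have hB : (0:ℝ) < y^2 - 1 := by nlinarith
  have hP : (0:ℝ) < (x+1)^2 - 1 := by nlinarith
  have hQ : (0:ℝ) < x^2 - 1 := by nlinarith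
  have hnum : 0 < (y - x - 1)^2 - 1 + S * ((x+1)^2 - 1) := by nlinarith
  have hden : 0 < y^2 - 1 + S * (x^2 - 1) := by nlinarith
  have hpoly : 3 * ((x+1)^2 - 1) * (y^2 - 1) ≤ 35 * (x^2 - 1) * ((y - x - 1)^2 - 1) := by
    have h1 : 35 * (x^2 - 1) * ((y - x - 1)^2 - 1) - 3 * ((x+1)^2 - 1) * (y^2 - 1)
        = 342*(y-2*x-2) + 81*(y-2*x-2)^2 + 544*(x-2) + 738*(x-2)*(y-2*x-2)
          + 122*(x-2)*(y-2*x-2)^2 + 592*(x-2)^2 + 382*(x-2)^2*(y-2*x-2)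
          + 32*(x-2)^2*(y-2*x-2)^2 + 206*(x-2)^3 + 58*(x-2)^3*(y-2*x-2)
          + 23*(x-2)^4 := by ring
    nlinarith [h1, ht, hu, sq_nonneg (y-2*x-2), mul_nonneg hu ht,
      mul_nonneg hu (sq_nonneg (y-2*x-2)), sq_nonneg (x-2),
      mul_nonneg (sq_nonneg (x-2)) ht,
      mul_nonneg (sq_nonneg (x-2)) (sq_nonneg (y-2*x-2)),
      mul_nonneg (mul_nonneg hu hu) hu,
      mul_nonneg (mul_nonneg (mul_nonneg hu hu) hu) ht,
      pow_nonneg hu 4]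
  have key : (((y - x - 1)^2 - 1 + S * ((x+1)^2 - 1)) / (y^2 - 1 + S * (x^2 - 1)))
      * ((y^2 - 1) / ((y - x - 1)^2 - 1)) < 35/3 := by
    rw [div_mul_div_comm, div_lt_div_iff₀ (by positivity) (by norm_num)]
    nlinarith [mul_pos hA hB, mul_nonneg hS.le (sub_nonneg.mpr hpoly)]
  have hX : 0 < ((y - x - 1)^2 - 1 + S * ((x+1)^2 - 1)) / (y^2 - 1 + S * (x^2 - 1)) :=
    div_pos hnum hden
  have hY : 0 < (y^2 - 1) / ((y - x - 1)^2 - 1) := div_pos hB hA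
  have hlog : Real.logb 2 (((y - x - 1)^2 - 1 + S * ((x+1)^2 - 1)) / (y^2 - 1 + S * (x^2 - 1))
        * ((y^2 - 1) / ((y - x - 1)^2 - 1))) < Real.logb 2 (35/3) :=
    Real.logb_lt_logb one_lt_two (mul_pos hX hY) key
  rw [Real.logb_mul (ne_of_gt hX) (ne_of_gt hY)] at hlog
  have hr : Real.logb 2 (8/3) + Real.logb 2 (35/8) = Real.logb 2 (35/3) := by
    rw [← Real.logb_mul (by norm_num) (by norm_num)]; norm_num
  linarith [hlog, hr]
end

section
/- Let M1 ≥ 2 and N1 ≥ 2(M1 + 1) be integers, and let S > 0 be real with N1² − 1 ≤ (35/3)·S·(M1² − 1). Then (1/2)·log₂(N1²/(N1 − M1 − 1)²) + (1/2)·log₂((N1² − 1 + S·((M1+1)² − 1))/(S·(M1² − 1))) < (1/2)·log₂(35/8) + (1/2)·log₂(35/3 + 8/3). -/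
/-- Bound on the vertical gap between adjacent Gaussian capacity corner points
for the weak user in the time-sharing analysis. -/
theorem stmt_8 (M1 N1 : ℕ) (hM1 : 2 ≤ M1) (hN1 : 2 * (M1 + 1) ≤ N1)
    (S : ℝ) (hS : 0 < S)
    (hcond : (N1 : ℝ)^2 - 1 ≤ (35/3) * S * ((M1 : ℝ)^2 - 1)) :
    (1/2) * Real.logb 2 ((N1 : ℝ)^2 / ((N1 : ℝ) - M1 - 1)^2)
      + (1/2) * Real.logb 2 (((N1 : ℝ)^2 - 1 + S * (((M1 : ℝ) + 1)^2 - 1))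
          / (S * ((M1 : ℝ)^2 - 1)))
      < (1/2) * Real.logb 2 (35/8) + (1/2) * Real.logb 2 (35/3 + 8/3) := by
  have hm : (2:ℝ) ≤ (M1:ℝ) := by exact_mod_cast hM1
  have hn : 2 * ((M1:ℝ) + 1) ≤ (N1:ℝ) := by exact_mod_cast hN1
  set m := (M1:ℝ) with hmdef
  set n := (N1:ℝ) with hndef
  have hd : 0 < n - m - 1 := by linarith
  have hden : 0 < S * (m^2 - 1) := by nlinarith
  have hnpos : 0 < n := by linarith
  have h1 : n^2 / (n - m - 1)^2 < 35/8 := by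
    rw [div_lt_iff₀ (by positivity)]
    nlinarith [sq_nonneg (n - 2*m - 2)]
  have h2 : (n^2 - 1 + S * ((m+1)^2 - 1)) / (S * (m^2 - 1)) ≤ 35/3 + 8/3 := by
    rw [div_le_iff₀ hden]
    nlinarith [mul_nonneg hS.le (show (0:ℝ) ≤ (m-2)*(5*m+4) by nlinarith)]
  have hpos2 : 0 < (n^2 - 1 + S * ((m+1)^2 - 1)) / (S * (m^2 - 1)) := by
    apply div_pos _ hden; nlinarith
  have hl1 : Real.logb 2 (n^2/(n-m-1)^2) < Real.logb 2 (35/8) :=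
    Real.logb_lt_logb (by norm_num) (by positivity) h1
  have hl2 : Real.logb 2 ((n^2 - 1 + S * ((m+1)^2 - 1)) / (S * (m^2 - 1)))
      ≤ Real.logb 2 (35/3 + 8/3) :=
    Real.logb_le_logb_of_le (by norm_num) hpos2 h2
  linarith
end

section
/- Let F be a discrete real random variable taking finitely many values with minimum distance d = min_{f ≠ f'} |f − f'| > 0, and let Z be an independent real random variable with mean 0 and variance 1. Then I(F; F + Z) ≥ H(F) − (1/2)·log₂(2πe/12) − (1/2)·log₂(1 + 12/d²). -/
open MeasureTheory ProbabilityTheory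

/-- Shannon entropy (in bits) of a real random variable `F` on `(Ω, μ)` whose
values lie in the finite set `vals`. -/
noncomputable def discEntropy {Ω : Type*} [MeasurableSpace Ω] (μ : Measure Ω)
    (F : Ω → ℝ) (vals : Finset ℝ) : ℝ :=
  ∑ x ∈ vals, -((μ (F ⁻¹' {x})).toReal * Real.logb 2 (μ (F ⁻¹' {x})).toReal)

/-- Conditional Shannon entropy (in bits) `H(F | Y)` of a discrete real random
variable `F` with values in `vals`, given a real observation `Y`, defined via
the regular conditional distribution `condDistrib F Y μ`. -/
noncomputable def condDiscEntropy {Ω : Type*} [MeasurableSpace Ω] (μ : Measure Ω) [IsFiniteMeasure μ]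
    (F Y : Ω → ℝ) (vals : Finset ℝ) : ℝ :=
  ∫ y, (∑ x ∈ vals,
      -(((condDistrib F Y μ) y {x}).toReal
          * Real.logb 2 (((condDistrib F Y μ) y {x})).toReal)) ∂(μ.map Y)

/-- Mutual information (in bits) `I(F; Y) = H(F) − H(F | Y)` for a discrete
real random variable `F` with values in `vals`. -/
noncomputable def mutualInfoDisc {Ω : Type*} [MeasurableSpace Ω] (μ : Measure Ω) [IsFiniteMeasure μ]
    (F Y : Ω → ℝ) (vals : Finset ℝ) : ℝ :=
  discEntropy μ F vals - condDiscEntropy μ F Y vals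

section DytsoAux
open Real Set

/-- integral of (t-y)^2 over [x-d/2, x+d/2] -/
lemma sq_int (x y d : ℝ) :
    ∫ t in (x - d/2)..(x + d/2), (t - y)^2 = d * ((x - y)^2 + d^2/12) := by
  rw [intervalIntegral.integral_comp_sub_right (fun t => t^2) y]
  rw [integral_pow]
  ring

/-- tangent-line lower bound for the gaussian integral over an interval -/
lemma gauss_lb (y τ2 d x : ℝ) (hτ : 0 < τ2) (hd : 0 < d) :
    d * Real.exp (-(((x - y)^2 + d^2/12) / (2*τ2)))
      ≤ ∫ t in (x - d/2)..(x + d/2), Real.exp (-((t - y)^2 / (2*τ2))) := by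
  set m : ℝ := -(((x - y)^2 + d^2/12) / (2*τ2)) with hm
  have hle : x - d/2 ≤ x + d/2 := by linarith
  have key : ∀ t : ℝ, Real.exp m * (1 + (-((t - y)^2 / (2*τ2)) - m))
      ≤ Real.exp (-((t - y)^2 / (2*τ2))) := by
    intro t
    have h := Real.add_one_le_exp (-((t - y)^2 / (2*τ2)) - m)
    calc Real.exp m * (1 + (-((t - y)^2 / (2*τ2)) - m))
        ≤ Real.exp m * Real.exp (-((t - y)^2 / (2*τ2)) - m) := by
          apply mul_le_mul_of_nonneg_left _ (Real.exp_pos m).le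
          linarith
      _ = Real.exp (-((t - y)^2 / (2*τ2))) := by rw [← Real.exp_add]; ring_nf
  have hInt1 : IntervalIntegrable (fun t => Real.exp m * (1 + (-((t - y)^2 / (2*τ2)) - m)))
      volume (x - d/2) (x + d/2) := by
    apply Continuous.intervalIntegrable; continuity
  have hInt2 : IntervalIntegrable (fun t => Real.exp (-((t - y)^2 / (2*τ2))))
      volume (x - d/2) (x + d/2) := by
    apply Continuous.intervalIntegrable; continuity
  have mono := intervalIntegral.integral_mono_on hle hInt1 hInt2 (fun t _ => key t)
  refine le_trans (le_of_eq ?_) mono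
  have expand : ∀ t : ℝ, Real.exp m * (1 + (-((t - y)^2 / (2*τ2)) - m))
      = (Real.exp m * (1 - m)) + (-(Real.exp m / (2*τ2))) * (t - y)^2 := by
    intro t; ring
  rw [intervalIntegral.integral_congr (g := fun t => (Real.exp m * (1 - m)) + (-(Real.exp m / (2*τ2))) * (t - y)^2) (fun t _ => expand t)]
  rw [intervalIntegral.integral_add (by apply Continuous.intervalIntegrable; continuity)
      (by apply Continuous.intervalIntegrable; continuity)]
  rw [intervalIntegral.integral_const, intervalIntegral.integral_const_mul, sq_int]
  have : x + d/2 - (x - d/2) = d := by ring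
  rw [this]
  have h2 : (x - y)^2 + d^2/12 = -m*(2*τ2) := by rw [hm]; field_simp
  clear_value m
  rw [h2]
  field_simp
  ring

/-- total mass of the gaussian -/
lemma gauss_total (y τ2 : ℝ) (hτ : 0 < τ2) :
    ∫ t : ℝ, Real.exp (-((t - y)^2 / (2*τ2))) = Real.sqrt (2*Real.pi*τ2) := by
  have hb : (0:ℝ) < 1/(2*τ2) := by positivity
  have h1 : ∀ t : ℝ, Real.exp (-((t - y)^2 / (2*τ2)))
      = Real.exp (-(1/(2*τ2)) * (t - y)^2) := by
    intro t; congr 1; field_simp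
  simp_rw [h1]
  rw [integral_sub_right_eq_self (fun t => Real.exp (-(1/(2*τ2)) * t^2)) y]
  rw [integral_gaussian]
  congr 1
  field_simp

lemma gauss_integrable (y τ2 : ℝ) (hτ : 0 < τ2) :
    Integrable (fun t : ℝ => Real.exp (-((t - y)^2 / (2*τ2)))) := by
  have hb : (0:ℝ) < 1/(2*τ2) := by positivity
  have h1 : ∀ t : ℝ, Real.exp (-((t - y)^2 / (2*τ2)))
      = Real.exp (-(1/(2*τ2)) * (t - y)^2) := by
    intro t; congr 1; field_simp
  simp_rw [h1]
  exact (integrable_exp_neg_mul_sq hb).comp_sub_right y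

/-- sum of gaussian masses of disjoint intervals of width d around d-separated points -/
lemma gauss_sum_le (vals : Finset ℝ) (d : ℝ) (hd : 0 < d)
    (hdmin : ∀ f ∈ vals, ∀ f' ∈ vals, f ≠ f' → d ≤ |f - f'|)
    (y τ2 : ℝ) (hτ : 0 < τ2) :
    ∑ x ∈ vals, (∫ t in (x - d/2)..(x + d/2), Real.exp (-((t - y)^2 / (2*τ2))))
      ≤ Real.sqrt (2*Real.pi*τ2) := by
  set φ : ℝ → ℝ := fun t => Real.exp (-((t - y)^2 / (2*τ2))) with hφ
  have hint := gauss_integrable y τ2 hτ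
  have hIoc : ∀ x : ℝ, (∫ t in (x - d/2)..(x + d/2), φ t)
      = ∫ t in Ioc (x - d/2) (x + d/2), φ t := by
    intro x
    rw [intervalIntegral.integral_of_le (by linarith)]
  have hdisj : (↑vals : Set ℝ).PairwiseDisjoint (fun x => Ioc (x - d/2) (x + d/2)) := by
    intro a ha b hb hab
    have hab' := hdmin a (by simpa using ha) b (by simpa using hb) hab
    refine Set.disjoint_left.mpr ?_
    intro t ht ht'
    simp only [Set.mem_Ioc] at ht ht'
    rcases le_abs.mp hab' with h | h
    · linarith [ht.1, ht'.2]
    · linarith [ht.2, ht'.1]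
  calc ∑ x ∈ vals, (∫ t in (x - d/2)..(x + d/2), φ t)
      = ∑ x ∈ vals, ∫ t in Ioc (x - d/2) (x + d/2), φ t := by
        exact Finset.sum_congr rfl (fun x _ => hIoc x)
    _ = ∫ t in (⋃ x ∈ vals, Ioc (x - d/2) (x + d/2)), φ t := by
        rw [integral_biUnion_finset vals (fun x _ => measurableSet_Ioc) hdisj
          (fun x _ => hint.integrableOn)]
    _ ≤ ∫ t, φ t := setIntegral_le_integral hint
          (Filter.Eventually.of_forall (fun t => (Real.exp_pos _).le))
    _ = Real.sqrt (2*Real.pi*τ2) := gauss_total y τ2 hτ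

/-- Gibbs' inequality, finite form. -/
lemma gibbs (s : Finset ℝ) (p q : ℝ → ℝ) (hp0 : ∀ x ∈ s, 0 ≤ p x)
    (hp1 : ∑ x ∈ s, p x = 1) (hq0 : ∀ x ∈ s, 0 < q x) (hq1 : ∑ x ∈ s, q x ≤ 1) :
    ∑ x ∈ s, -(p x * Real.log (p x)) ≤ ∑ x ∈ s, -(p x * Real.log (q x)) := by
  have key : ∀ x ∈ s, -(p x * Real.log (p x)) ≤ -(p x * Real.log (q x)) + (q x - p x) := by
    intro x hx
    rcases eq_or_lt_of_le (hp0 x hx) with h | h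
    · rw [← h]; simp [(hq0 x hx).le]
    · have hqp : 0 < q x / p x := div_pos (hq0 x hx) h
      have hlog := Real.log_le_sub_one_of_pos hqp
      have : Real.log (q x / p x) = Real.log (q x) - Real.log (p x) :=
        Real.log_div (hq0 x hx).ne' h.ne'
      rw [this] at hlog
      have hmm := mul_le_mul_of_nonneg_left hlog h.le
      have h2 : p x * (q x / p x - 1) = q x - p x := by field_simp
      nlinarith [hmm, h2]
  calc ∑ x ∈ s, -(p x * Real.log (p x))
      ≤ ∑ x ∈ s, (-(p x * Real.log (q x)) + (q x - p x)) := Finset.sum_le_sum key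
    _ = ∑ x ∈ s, -(p x * Real.log (q x)) + (∑ x ∈ s, q x - ∑ x ∈ s, p x) := by
        rw [Finset.sum_add_distrib, Finset.sum_sub_distrib]
    _ ≤ ∑ x ∈ s, -(p x * Real.log (q x)) := by rw [hp1]; linarith

/-- Core entropy bound in nats. -/
lemma core_nats (vals : Finset ℝ) (d : ℝ) (hd : 0 < d)
    (hdmin : ∀ f ∈ vals, ∀ f' ∈ vals, f ≠ f' → d ≤ |f - f'|)
    (τ2 : ℝ) (hτ : 0 < τ2) (p : ℝ → ℝ) (hp0 : ∀ x ∈ vals, 0 ≤ p x)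
    (hp1 : ∑ x ∈ vals, p x = 1) (y : ℝ) :
    ∑ x ∈ vals, -(p x * Real.log (p x)) ≤
      Real.log (Real.sqrt (2*Real.pi*τ2) / d)
        + (∑ x ∈ vals, p x * ((x - y)^2 + d^2/12)) / (2*τ2) := by
  set S : ℝ := Real.sqrt (2*Real.pi*τ2) with hS
  have hSpos : 0 < S := Real.sqrt_pos.mpr (by positivity)
  set q : ℝ → ℝ := fun x => (∫ t in (x - d/2)..(x + d/2), Real.exp (-((t - y)^2 / (2*τ2)))) / S
    with hq
  have hq0 : ∀ x ∈ vals, 0 < q x := by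
    intro x _
    have := gauss_lb y τ2 d x hτ hd
    have h2 : 0 < d * Real.exp (-(((x - y)^2 + d^2/12) / (2*τ2))) := by positivity
    exact div_pos (lt_of_lt_of_le h2 this) hSpos
  have hq1 : ∑ x ∈ vals, q x ≤ 1 := by
    rw [hq]
    rw [← Finset.sum_div]
    rw [div_le_one hSpos]
    exact gauss_sum_le vals d hd hdmin y τ2 hτ
  have hqlb : ∀ x ∈ vals, -(Real.log (q x)) ≤ Real.log (S / d) + ((x - y)^2 + d^2/12) / (2*τ2) := by
    intro x hx
    have hlb := gauss_lb y τ2 d x hτ hd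
    have h2 : 0 < d * Real.exp (-(((x - y)^2 + d^2/12) / (2*τ2))) := by positivity
    set m : ℝ := -(((x - y)^2 + d^2/12) / (2*τ2)) with hm
    have hql : d * Real.exp m / S ≤ q x :=
      (div_le_div_iff_of_pos_right hSpos).mpr hlb
    have hlogq : Real.log (d * Real.exp m / S) ≤ Real.log (q x) :=
      Real.log_le_log (by positivity) hql
    have he1 : Real.log (d * Real.exp m / S) = Real.log d + m - Real.log S := by
      rw [Real.log_div (by positivity) hSpos.ne', Real.log_mul hd.ne' (Real.exp_pos _).ne',
        Real.log_exp]
    have he2 : Real.log (S / d) = Real.log S - Real.log d :=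
      Real.log_div hSpos.ne' hd.ne'
    rw [he1] at hlogq
    rw [he2, hm] at *
    linarith [hlogq]
  calc ∑ x ∈ vals, -(p x * Real.log (p x))
      ≤ ∑ x ∈ vals, -(p x * Real.log (q x)) := gibbs vals p q hp0 hp1 hq0 hq1
    _ ≤ ∑ x ∈ vals, p x * (Real.log (S / d) + ((x - y)^2 + d^2/12) / (2*τ2)) := by
        apply Finset.sum_le_sum
        intro x hx
        have h1 : -(p x * Real.log (q x)) = p x * (-(Real.log (q x))) := by ring
        rw [h1]
        exact mul_le_mul_of_nonneg_left (hqlb x hx) (hp0 x hx)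
    _ = Real.log (S / d) + (∑ x ∈ vals, p x * ((x - y)^2 + d^2/12)) / (2*τ2) := by
        have : ∀ x ∈ vals, p x * (Real.log (S / d) + ((x - y)^2 + d^2/12) / (2*τ2))
            = p x * Real.log (S / d) + (p x * ((x - y)^2 + d^2/12)) / (2*τ2) := by
          intro x _; ring
        rw [Finset.sum_congr rfl this, Finset.sum_add_distrib, ← Finset.sum_mul,
          hp1, ← Finset.sum_div, one_mul]

lemma core_logb (vals : Finset ℝ) (d : ℝ) (hd : 0 < d)
    (hdmin : ∀ f ∈ vals, ∀ f' ∈ vals, f ≠ f' → d ≤ |f - f'|)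
    (τ2 : ℝ) (hτ : 0 < τ2) (p : ℝ → ℝ) (hp0 : ∀ x ∈ vals, 0 ≤ p x)
    (hp1 : ∑ x ∈ vals, p x = 1) (y : ℝ) :
    ∑ x ∈ vals, -(p x * Real.logb 2 (p x)) ≤
      (Real.log (Real.sqrt (2*Real.pi*τ2) / d)
        + (∑ x ∈ vals, p x * ((x - y)^2 + d^2/12)) / (2*τ2)) / Real.log 2 := by
  have hl2 : 0 < Real.log 2 := Real.log_pos one_lt_two
  have h := core_nats vals d hd hdmin τ2 hτ p hp0 hp1 y
  calc ∑ x ∈ vals, -(p x * Real.logb 2 (p x))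
      = (∑ x ∈ vals, -(p x * Real.log (p x))) / Real.log 2 := by
        rw [Finset.sum_div]
        refine Finset.sum_congr rfl fun x _ => ?_
        rw [Real.logb]
        ring
    _ ≤ _ := (div_le_div_iff_of_pos_right hl2).mpr h

lemma const_eq (d : ℝ) (hd : 0 < d) :
    (Real.log (Real.sqrt (2*Real.pi*(1 + d^2/12)) / d)
        + (1 + d^2/12 * 1) / (2*(1 + d^2/12))) / Real.log 2
      = (1/2) * Real.logb 2 (2*Real.pi*Real.exp 1/12) + (1/2) * Real.logb 2 (1 + 12/d^2) := by
  have hτ : (0:ℝ) < 1 + d^2/12 := by positivity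
  have hsq : Real.log (Real.sqrt (2*Real.pi*(1+d^2/12)))
      = Real.log (2*Real.pi*(1+d^2/12)) / 2 := Real.log_sqrt (by positivity)
  have h12 : (1 + d^2/12 * 1) / (2*(1+d^2/12)) = 1/2 := by
    rw [mul_one]
    field_simp
  have e1 : Real.log (2*Real.pi*Real.exp 1/12) = Real.log (2*Real.pi) + 1 - Real.log 12 := by
    rw [Real.log_div (by positivity) (by norm_num),
      Real.log_mul (by positivity) (Real.exp_pos 1).ne', Real.log_exp]
  have e2 : Real.log (1+12/d^2) = Real.log (12 + d^2) - Real.log (d^2) := by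
    rw [show (1+12/d^2 : ℝ) = (12+d^2)/d^2 by field_simp; ring]
    rw [Real.log_div (by positivity) (by positivity)]
  have e3 : Real.log (2*Real.pi*(1+d^2/12))
      = Real.log (2*Real.pi) + Real.log (12+d^2) - Real.log 12 := by
    rw [show 2*Real.pi*(1+d^2/12) = 2*Real.pi*((12+d^2)/12) by ring]
    rw [Real.log_mul (by positivity) (by positivity),
      Real.log_div (by positivity) (by norm_num)]
    ring
  have e4 : Real.log (d^2) = 2 * Real.log d := by
    rw [show d^2 = d^2 by rfl, Real.log_pow]
    norm_num
  have hA : Real.log (Real.sqrt (2*Real.pi*(1+d^2/12)) / d)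
      = Real.log (2*Real.pi*(1+d^2/12)) / 2 - Real.log d := by
    rw [Real.log_div (Real.sqrt_ne_zero'.mpr (by positivity)) hd.ne', hsq]
  have key : Real.log (Real.sqrt (2*Real.pi*(1+d^2/12)) / d) + 1/2
      = (1/2)*Real.log (2*Real.pi*Real.exp 1/12) + (1/2)*Real.log (1+12/d^2) := by
    rw [hA, e1, e2, e3, e4]; ring
  rw [h12, Real.logb, Real.logb]
  rw [show (1:ℝ)/2 * (Real.log (2*Real.pi*Real.exp 1/12) / Real.log 2)
      + 1/2 * (Real.log (1 + 12/d^2) / Real.log 2)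
      = ((1/2)*Real.log (2*Real.pi*Real.exp 1/12) + (1/2)*Real.log (1 + 12/d^2)) / Real.log 2
    by ring]
  rw [← key]

end DytsoAux

/-- Proposition 1 of Dytso et al. (2016): if `F` is a discrete random variable
taking finitely many values with minimum distance `d > 0`, and `Z` is an
independent random variable with mean `0` and variance `1`, then
`I(F; F+Z) ≥ H(F) − (1/2)log₂(2πe/12) − (1/2)log₂(1 + 12/d²)`. -/
theorem stmt_17 {Ω : Type*} [MeasurableSpace Ω] (μ : Measure Ω)
    [IsProbabilityMeasure μ] (F Z : Ω → ℝ) (hF : Measurable F) (hZ : Measurable Z)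
    (vals : Finset ℝ) (hvals : ∀ ω, F ω ∈ vals) (d : ℝ) (hd : 0 < d)
    (hdmin : ∀ f ∈ vals, ∀ f' ∈ vals, f ≠ f' → d ≤ |f - f'|)
    (hindep : IndepFun F Z μ)
    (hmean : ∫ ω, Z ω ∂μ = 0) (hvar : ∫ ω, (Z ω)^2 ∂μ = 1) :
    mutualInfoDisc μ F (fun ω => F ω + Z ω) vals
      ≥ discEntropy μ F vals
        - (1/2) * Real.logb 2 (2 * Real.pi * Real.exp 1 / 12)
        - (1/2) * Real.logb 2 (1 + 12 / d^2) := by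
  classical
  set Y : Ω → ℝ := fun ω => F ω + Z ω with hYdef
  have hY : Measurable Y := hF.add hZ
  have hpair : Measurable (fun ω => (Y ω, F ω)) := hY.prodMk hF
  set ν : Measure ℝ := μ.map Y with hν
  set κ : Kernel ℝ ℝ := condDistrib F Y μ with hκ
  set ρ : Measure (ℝ × ℝ) := μ.map (fun ω => (Y ω, F ω)) with hρ
  haveI : IsProbabilityMeasure ρ := Measure.isProbabilityMeasure_map hpair.aemeasurable
  haveI : IsProbabilityMeasure ν := Measure.isProbabilityMeasure_map hY.aemeasurable
  have hvs : MeasurableSet (↑vals : Set ℝ) := vals.measurableSet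
  have hcomp : ν ⊗ₘ κ = ρ := by
    have hfst : ρ.fst = ν := Measure.fst_map_prodMk hF
    rw [hκ, condDistrib, ← hfst]
    exact ρ.disintegrate ρ.condKernel
  -- Z^2 integrable
  have hZ2 : Integrable (fun ω => (Z ω)^2) μ := by
    by_contra h
    rw [integral_undef h] at hvar; norm_num at hvar
  -- a.e. concentration on vals
  have h2 : ∀ᵐ y ∂ν, κ y (↑vals : Set ℝ)ᶜ = 0 := by
    have hz : (ν ⊗ₘ κ) (Set.univ ×ˢ (↑vals : Set ℝ)ᶜ) = 0 := by
      rw [hcomp, hρ, Measure.map_apply hpair (MeasurableSet.univ.prod hvs.compl)]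
      have : (fun ω => (Y ω, F ω)) ⁻¹' (Set.univ ×ˢ (↑vals : Set ℝ)ᶜ) = ∅ := by
        ext ω; simp [hvals ω]
      rw [this, measure_empty]
    rw [Measure.compProd_apply (MeasurableSet.univ.prod hvs.compl)] at hz
    have hpre : ∀ y : ℝ, (Prod.mk y ⁻¹' (Set.univ ×ˢ (↑vals : Set ℝ)ᶜ)) = (↑vals : Set ℝ)ᶜ := by
      intro y; ext x; simp
    simp_rw [hpre] at hz
    exact (lintegral_eq_zero_iff (κ.measurable_coe hvs.compl)).mp hz
  -- a.e. the masses sum to 1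
  have h3 : ∀ᵐ y ∂ν, ∑ x ∈ vals, (κ y {x}).toReal = 1 := by
    filter_upwards [h2] with y hy
    have h1 : κ y (↑vals : Set ℝ) = 1 := by
      have hu := measure_add_measure_compl (μ := κ y) hvs
      rw [hy, add_zero, measure_univ] at hu
      exact hu
    have hsum : ∑ x ∈ vals, κ y {x} = κ y (↑vals : Set ℝ) := by
      rw [← measure_biUnion_finset ?_ (fun x _ => measurableSet_singleton x)]
      · congr 1; ext t; simp
      · intro a _ b _ hab
        exact Set.disjoint_singleton.mpr hab
    have := congrArg ENNReal.toReal (hsum.trans h1)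
    rwa [ENNReal.toReal_sum (fun x _ => measure_ne_top _ _), ENNReal.toReal_one] at this
  -- conditional second moment
  set σ2 : ℝ → ℝ := fun y => ∑ x ∈ vals, (κ y {x}).toReal * (x - y)^2 with hσ2
  have hσ2m : Measurable σ2 := by
    apply Finset.measurable_sum
    intro x _
    exact ((κ.measurable_coe (measurableSet_singleton x)).ennreal_toReal).mul
      ((measurable_const.sub measurable_id).pow_const 2)
  have hσ20 : ∀ y, 0 ≤ σ2 y :=
    fun y => Finset.sum_nonneg fun x _ => mul_nonneg ENNReal.toReal_nonneg (sq_nonneg _)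
  have hG : ∀ y, ENNReal.ofReal (σ2 y) = ∑ x ∈ vals, κ y {x} * ENNReal.ofReal ((x - y)^2) := by
    intro y
    rw [hσ2, ENNReal.ofReal_sum_of_nonneg
      (fun x _ => mul_nonneg ENNReal.toReal_nonneg (sq_nonneg _))]
    refine Finset.sum_congr rfl fun x _ => ?_
    rw [ENNReal.ofReal_mul ENNReal.toReal_nonneg, ENNReal.ofReal_toReal (measure_ne_top _ _)]
  have hmf : Measurable (fun p : ℝ × ℝ => ENNReal.ofReal ((p.2 - p.1)^2)) :=
    ((measurable_snd.sub measurable_fst).pow_const 2).ennreal_ofReal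
  have hlint : ∫⁻ y, ENNReal.ofReal (σ2 y) ∂ν = 1 := by
    have hae : ∀ᵐ y ∂ν, ENNReal.ofReal (σ2 y) = ∫⁻ x, ENNReal.ofReal ((x - y)^2) ∂(κ y) := by
      filter_upwards [h2] with y hy
      have hmem : ∀ᵐ x ∂(κ y), x ∈ (↑vals : Set ℝ) := by
        rw [ae_iff]
        exact hy
      have hres : (κ y).restrict (↑vals : Set ℝ) = κ y :=
        Measure.restrict_eq_self_of_ae_mem hmem
      rw [hG y]
      conv_rhs => rw [← hres]
      rw [lintegral_finset]
      exact Finset.sum_congr rfl fun x _ => (mul_comm _ _)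
    rw [lintegral_congr_ae hae, ← Measure.lintegral_compProd hmf, hcomp, hρ,
      lintegral_map hmf hpair]
    have heq : ∀ ω, ENNReal.ofReal ((F ω - Y ω)^2) = ENNReal.ofReal ((Z ω)^2) := by
      intro ω; congr 1; rw [hYdef]; ring
    rw [lintegral_congr heq, ← ofReal_integral_eq_lintegral_ofReal hZ2
      (Filter.Eventually.of_forall fun ω => sq_nonneg _), hvar, ENNReal.ofReal_one]
  have hσ2int : Integrable σ2 ν := by
    refine ⟨hσ2m.aestronglyMeasurable, ?_⟩
    have hnn : ∫⁻ y, ‖σ2 y‖ₑ ∂ν = 1 := by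
      rw [← hlint]
      exact lintegral_congr fun y => Real.enorm_eq_ofReal (hσ20 y)
    rw [HasFiniteIntegral, hnn]
    exact ENNReal.one_lt_top
  have hσ2eq : ∫ y, σ2 y ∂ν = 1 := by
    rw [integral_eq_lintegral_of_nonneg_ae (Filter.Eventually.of_forall hσ20)
      hσ2m.aestronglyMeasurable, hlint, ENNReal.toReal_one]
  -- the dominating function
  set τ2 : ℝ := 1 + d^2/12 with hτ2
  have hτ2pos : 0 < τ2 := by rw [hτ2]; positivity
  set g : ℝ → ℝ := fun y => (Real.log (Real.sqrt (2*Real.pi*τ2) / d)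
      + (σ2 y + d^2/12 * 1) / (2*τ2)) / Real.log 2 with hg
  have hI1 : Integrable (fun y => σ2 y + d^2/12 * 1) ν := hσ2int.add (integrable_const _)
  have hI2 : Integrable (fun y => (σ2 y + d^2/12 * 1) / (2*τ2)) ν := hI1.div_const _
  have hI3 : Integrable (fun y => Real.log (Real.sqrt (2*Real.pi*τ2) / d)
      + (σ2 y + d^2/12 * 1) / (2*τ2)) ν := (integrable_const _).add hI2
  have hgint : Integrable g ν := hI3.div_const _
  have hcond : condDiscEntropy μ F Y vals ≤ ∫ y, g y ∂ν := by
    rw [condDiscEntropy]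
    apply integral_mono_of_nonneg ?_ hgint ?_
    · refine Filter.Eventually.of_forall fun y => ?_
      refine Finset.sum_nonneg fun x _ => ?_
      have hp1 : (κ y {x}).toReal ≤ 1 := by
        rw [← ENNReal.toReal_one]
        exact ENNReal.toReal_mono ENNReal.one_ne_top prob_le_one
      have := Real.logb_nonpos (b := 2) ENNReal.toReal_nonneg hp1 (hb := one_lt_two)
      simp only [neg_nonneg]
      exact mul_nonpos_iff.mpr (Or.inl ⟨ENNReal.toReal_nonneg, this⟩)
    · filter_upwards [h3] with y hy
      have hb := core_logb vals d hd hdmin τ2 hτ2pos (fun x => (κ y {x}).toReal)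
        (fun x _ => ENNReal.toReal_nonneg) hy y
      refine hb.trans (le_of_eq ?_)
      rw [hg]
      congr 2
      simp_rw [mul_add]
      rw [Finset.sum_add_distrib, ← Finset.sum_mul, hy, hσ2]
      ring
  have hIg : ∫ y, g y ∂ν = (1/2) * Real.logb 2 (2 * Real.pi * Real.exp 1 / 12)
      + (1/2) * Real.logb 2 (1 + 12 / d^2) := by
    rw [hg]
    rw [integral_div, integral_add (integrable_const _) hI2, integral_const,
      integral_div, integral_add hσ2int (integrable_const _), hσ2eq, integral_const,
      probReal_univ, one_smul, one_smul]
    exact const_eq d hd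
  rw [ge_iff_le, mutualInfoDisc]
  have := hcond.trans (le_of_eq hIg)
  linarith
end
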